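/- arXiv:1106.0200 — 3 statements merged into one kernel-verified Lean document; each statement's English description precedes it below -/
import Mathlib

section
/- Let (E, ρ) be a metric space, D ≥ 0, and φ a Radon measure on E. Define the upper H^D-derivative of φ at x as D(φ,D,x) = (1/α(D)) · limsup over closed sets F containing x with diam(F) → 0 of φ(F)/(diam F)^D, where α(D) is the normalizing constant of D-dimensional Hausdorff measure. Let E^∞ = {x ∈ E : D(φ,D,x) = +∞}. Then the restriction of φ to E \ E^∞ is absolutely continuous with respect to the D-dimensional Hausdorff measure H^D; that is, for every Borel set B with H^D(B) = 0, one has φ(B \ E^∞) = 0. -/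
open MeasureTheory ENNReal Set

/-- The normalizing constant `α(D) = Γ(1/2)^D / (2^D Γ(1 + D/2))` of `D`-dimensional
Hausdorff measure. -/
noncomputable def hausdorffNormalizingConst (D : ℝ) : ℝ :=
  Real.Gamma (1 / 2) ^ D / (2 ^ D * Real.Gamma (1 + D / 2))

/-- The upper `H^D`-derivative of a measure `φ` at a point `x`:
`(1/α(D)) · limsup_{F ∋ x, diam F → 0, F closed} φ(F) / (diam F)^D`. -/
noncomputable def upperHDeriv {E : Type*} [MetricSpace E] [MeasurableSpace E]
    (φ : Measure E) (D : ℝ) (x : E) : ℝ≥0∞ :=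
  (ENNReal.ofReal (hausdorffNormalizingConst D))⁻¹ *
    ⨅ (δ : ℝ≥0∞) (_ : 0 < δ), ⨆ (F : Set E) (_ : IsClosed F) (_ : x ∈ F)
      (_ : EMetric.diam F ≤ δ), φ F / EMetric.diam F ^ D

lemma hausdorffNormalizingConst_pos {D : ℝ} (hD : 0 ≤ D) :
    0 < hausdorffNormalizingConst D := by
  have h1 : 0 < Real.Gamma (1/2) := Real.Gamma_pos_of_pos (by norm_num)
  have h2 : 0 < Real.Gamma (1 + D/2) := Real.Gamma_pos_of_pos (by linarith)
  exact div_pos (Real.rpow_pos_of_pos h1 D) (mul_pos (Real.rpow_pos_of_pos two_pos D) h2)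

/-- Key comparison lemma: if every closed set of diameter at most `δ` meeting `A`
has `φ`-measure at most `c` times its diameter to the `D`, and `B` is `H^D`-null,
then `φ (A ∩ B) = 0`. -/
lemma key_lemma {E : Type*} [MetricSpace E] [MeasurableSpace E] [BorelSpace E]
    (φ : Measure E) (D : ℝ) (c : ℝ≥0∞) (hc : c ≠ ∞)
    (δ : ℝ≥0∞) (hδ : 0 < δ) (A B : Set E)
    (hA : ∀ x ∈ A, ∀ F : Set E, IsClosed F → x ∈ F → EMetric.diam F ≤ δ →
      φ F ≤ c * EMetric.diam F ^ D)
    (hB : μH[D] B = 0) : φ (A ∩ B) = 0 := by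
  classical
  have main : ∀ ε : ℝ≥0∞, 0 < ε → φ (A ∩ B) ≤ c * ε := by
    intro ε hε
    -- get a covering of B with small diameters and small sum
    have h0 : (⨅ (t : ℕ → Set E) (_ : B ⊆ ⋃ n, t n) (_ : ∀ n, EMetric.diam (t n) ≤ δ),
        ∑' n, ⨆ _ : (t n).Nonempty, EMetric.diam (t n) ^ D) ≤ μH[D] B := by
      rw [Measure.hausdorffMeasure_apply]
      exact le_iSup₂ (f := fun r (_ : 0 < r) => ⨅ (t : ℕ → Set E) (_ : B ⊆ ⋃ n, t n)
        (_ : ∀ n, EMetric.diam (t n) ≤ r),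
          ∑' n, ⨆ _ : (t n).Nonempty, EMetric.diam (t n) ^ D) δ hδ
    rw [hB, nonpos_iff_eq_zero] at h0
    have hlt : (⨅ (t : ℕ → Set E) (_ : B ⊆ ⋃ n, t n) (_ : ∀ n, EMetric.diam (t n) ≤ δ),
        ∑' n, ⨆ _ : (t n).Nonempty, EMetric.diam (t n) ^ D) < ε := by
      rw [h0]; exact hε
    simp only [iInf_lt_iff] at hlt
    obtain ⟨t, hcov, hdiam, hsum⟩ := hlt
    -- the modified covering by closures of sets meeting A
    set s : ℕ → Set E := fun i => if (t i ∩ A).Nonempty then closure (t i) else ∅ with hs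
    have hsub : A ∩ B ⊆ ⋃ i, s i := by
      rintro x ⟨hxA, hxB⟩
      obtain ⟨i, hi⟩ := mem_iUnion.1 (hcov hxB)
      have hne : (t i ∩ A).Nonempty := ⟨x, hi, hxA⟩
      refine mem_iUnion.2 ⟨i, ?_⟩
      rw [hs]; simp only [if_pos hne]
      exact subset_closure hi
    calc φ (A ∩ B) ≤ ∑' i, φ (s i) := (measure_mono hsub).trans (measure_iUnion_le s)
      _ ≤ ∑' i, c * (⨆ _ : (t i).Nonempty, EMetric.diam (t i) ^ D) := by
          refine ENNReal.tsum_le_tsum fun i => ?_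
          by_cases h : (t i ∩ A).Nonempty
          · obtain ⟨y, hyt, hyA⟩ := h
            have h1 : φ (s i) ≤ c * EMetric.diam (closure (t i)) ^ D := by
              have hne : (t i ∩ A).Nonempty := ⟨y, hyt, hyA⟩
              rw [hs]; simp only [if_pos hne]
              exact hA y hyA _ isClosed_closure (subset_closure hyt)
                (by exact (EMetric.diam_closure _).trans_le (hdiam i))
            rw [show EMetric.diam (closure (t i)) = EMetric.diam (t i) from EMetric.diam_closure _] at h1
            refine h1.trans (mul_le_mul_right ?_ c)
            exact le_iSup (fun _ : (t i).Nonempty => EMetric.diam (t i) ^ D) ⟨y, hyt⟩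
          · rw [hs]; simp only [if_neg h, measure_empty]; exact zero_le
      _ = c * ∑' i, (⨆ _ : (t i).Nonempty, EMetric.diam (t i) ^ D) := ENNReal.tsum_mul_left
      _ ≤ c * ε := mul_le_mul_right hsum.le c
  refine le_antisymm ?_ zero_le
  refine ENNReal.le_of_forall_pos_le_add fun ε hε _ => ?_
  rw [zero_add]
  have hc1 : c + 1 ≠ ∞ := ENNReal.add_ne_top.2 ⟨hc, one_ne_top⟩
  have hε' : 0 < (ε : ℝ≥0∞) / (c + 1) :=
    ENNReal.div_pos (by exact_mod_cast hε.ne') hc1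
  calc φ (A ∩ B) ≤ c * ((ε : ℝ≥0∞) / (c + 1)) := main _ hε'
    _ ≤ (c + 1) * ((ε : ℝ≥0∞) / (c + 1)) := mul_le_mul_left le_self_add _
    _ ≤ ε := ENNReal.mul_div_le

/-- the restriction of a Radon measure `φ` to the complement of the set
`E^∞` where its upper `H^D`-derivative is infinite is absolutely continuous with
respect to the `D`-dimensional Hausdorff measure: every Borel set `B` that is
`H^D`-null satisfies `φ(B \ E^∞) = 0`. -/
theorem restriction_absolutelyContinuous_hausdorff
    {E : Type*} [MetricSpace E] [MeasurableSpace E] [BorelSpace E]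
    (φ : Measure E) [IsLocallyFiniteMeasure φ] [φ.InnerRegular]
    (D : ℝ) (hD : 0 ≤ D)
    (Einf : Set E) (hEinf : Einf = {x : E | upperHDeriv φ D x = ∞})
    (B : Set E) (hB : MeasurableSet B) (hBnull : μH[D] B = 0) :
    φ (B \ Einf) = 0 := by
  set A : ℕ → Set E := fun n => {x | ∀ F : Set E, IsClosed F → x ∈ F →
    EMetric.diam F ≤ ((n : ℝ≥0∞) + 1)⁻¹ → φ F ≤ (n : ℝ≥0∞) * EMetric.diam F ^ D} with hA
  have hsub : B \ Einf ⊆ ⋃ n, A n ∩ B := by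
    rintro x ⟨hxB, hxE⟩
    rw [hEinf] at hxE
    have hx : upperHDeriv φ D x ≠ ∞ := hxE
    -- the iInf part is finite
    have hcpos : 0 < ENNReal.ofReal (hausdorffNormalizingConst D) :=
      ENNReal.ofReal_pos.2 (hausdorffNormalizingConst_pos hD)
    have hI : (⨅ (δ : ℝ≥0∞) (_ : 0 < δ), ⨆ (F : Set E) (_ : IsClosed F) (_ : x ∈ F)
        (_ : EMetric.diam F ≤ δ), φ F / EMetric.diam F ^ D) ≠ ∞ := by
      intro hI
      apply hx
      rw [upperHDeriv, hI, ENNReal.mul_top]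
      simp [hcpos.ne']
    have hIlt : (⨅ (δ : ℝ≥0∞) (_ : 0 < δ), ⨆ (F : Set E) (_ : IsClosed F) (_ : x ∈ F)
        (_ : EMetric.diam F ≤ δ), φ F / EMetric.diam F ^ D) < ∞ := hI.lt_top
    simp only [iInf_lt_iff] at hIlt
    obtain ⟨δ, hδ, hSδ⟩ := hIlt
    obtain ⟨n₁, hn₁⟩ := ENNReal.exists_nat_gt hSδ.ne
    obtain ⟨n₂, hn₂⟩ := ENNReal.exists_inv_nat_lt hδ.ne'
    refine mem_iUnion.2 ⟨max n₁ n₂, ?_, hxB⟩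
    intro F hFc hxF hFd
    set N := max n₁ n₂
    have hdle : EMetric.diam F ≤ δ := by
      refine hFd.trans (le_trans ?_ hn₂.le)
      refine ENNReal.inv_le_inv' ?_
      have h1 : (n₂ : ℝ≥0∞) ≤ (N : ℝ≥0∞) := Nat.cast_le.2 (le_max_right n₁ n₂)
      exact h1.trans le_self_add
    have hS : φ F / EMetric.diam F ^ D ≤ (N : ℝ≥0∞) := by
      refine le_trans ?_ (hn₁.le.trans (Nat.cast_le.2 (le_max_left n₁ n₂)))
      exact le_iSup_of_le F (le_iSup_of_le hFc (le_iSup_of_le hxF (le_iSup_of_le hdle le_rfl)))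
    by_cases hb : EMetric.diam F ^ D = 0
    · have hφ : φ F = 0 := by
        by_contra hne
        rw [hb, ENNReal.div_zero hne] at hS
        exact ENNReal.natCast_ne_top N (top_le_iff.1 hS)
      rw [hφ]
      exact zero_le
    · have hb' : EMetric.diam F ^ D ≠ ∞ := by
        refine ENNReal.rpow_ne_top_of_nonneg hD ?_
        exact ne_top_of_le_ne_top (ENNReal.inv_ne_top.2 (by simp)) hFd
      exact (ENNReal.div_le_iff hb hb').1 hS
  refine measure_mono_null hsub (measure_iUnion_null fun n => ?_)
  exact key_lemma φ D (n : ℝ≥0∞) (by simp) ((n : ℝ≥0∞) + 1)⁻¹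
    (ENNReal.inv_pos.2 (by simp)) (A n) B (fun x hx => hx) hBnull
end

section
/- Let (E, ρ) be a metric space, D ≥ 0, B ⊆ E a Borel set, and φ a Radon measure on E. If φ(B \ E^∞) > 0, where E^∞ is the set of points where the upper H^D-derivative of φ is infinite, then the Hausdorff dimension of B is at least D. -/
open MeasureTheory ENNReal Set

/-- Covering lemma: if `φ F ≤ (n+1) * diam F ^ D` for all closed `F` of diameter
at most `(n+1)⁻¹` containing a point of `A`, then `φ A / (n+1) ≤ μH[D] A`. -/
lemma key_cover {E : Type*} [MetricSpace E] [MeasurableSpace E] [BorelSpace E]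
    (φ : Measure E) (D : ℝ) (n : ℕ) (A : Set E)
    (hA : ∀ x ∈ A, ∀ F : Set E, IsClosed F → x ∈ F →
      EMetric.diam F ≤ ((n : ℝ≥0∞) + 1)⁻¹ → φ F ≤ ((n : ℝ≥0∞) + 1) * EMetric.diam F ^ D) :
    φ A / ((n : ℝ≥0∞) + 1) ≤ μH[D] A := by
  classical
  rw [Measure.hausdorffMeasure_apply]
  refine le_trans ?_ (le_iSup₂ (f := fun (r : ℝ≥0∞) (_ : 0 < r) =>
    ⨅ (t : ℕ → Set E) (_ : A ⊆ ⋃ m, t m) (_ : ∀ m, EMetric.diam (t m) ≤ r),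
      ∑' m, ⨆ _ : (t m).Nonempty, EMetric.diam (t m) ^ D)
    ((n : ℝ≥0∞) + 1)⁻¹ (ENNReal.inv_pos.2 (by simp)))
  refine le_iInf fun t => le_iInf fun hcov => le_iInf fun hdiam => ?_
  refine ENNReal.div_le_of_le_mul ?_
  set s : ℕ → Set E := fun i => if (A ∩ t i).Nonempty then closure (t i) else ∅ with hs
  have hsub : A ⊆ ⋃ i, s i := by
    intro x hx
    obtain ⟨i, hi⟩ := mem_iUnion.1 (hcov hx)
    refine mem_iUnion.2 ⟨i, ?_⟩
    have hne : (A ∩ t i).Nonempty := ⟨x, hx, hi⟩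
    simp only [hs, if_pos hne]
    exact subset_closure hi
  calc φ A ≤ φ (⋃ i, s i) := measure_mono hsub
    _ ≤ ∑' i, φ (s i) := measure_iUnion_le _
    _ ≤ ∑' i, ((n : ℝ≥0∞) + 1) * ⨆ _ : (t i).Nonempty, EMetric.diam (t i) ^ D := by
        refine ENNReal.tsum_le_tsum fun i => ?_
        by_cases h : (A ∩ t i).Nonempty
        · obtain ⟨x, hxA, hxt⟩ := id h
          simp only [hs]
          rw [if_pos h, iSup_pos (Set.nonempty_of_mem hxt)]
          have := hA x hxA (closure (t i)) isClosed_closure (subset_closure hxt)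
            (by rw [show EMetric.diam (closure (t i)) = EMetric.diam (t i) from Metric.ediam_closure _]; exact hdiam i)
          rwa [show EMetric.diam (closure (t i)) = EMetric.diam (t i) from Metric.ediam_closure _] at this
        · simp [hs, if_neg h]
    _ = (∑' i, ⨆ _ : (t i).Nonempty, EMetric.diam (t i) ^ D) * ((n : ℝ≥0∞) + 1) := by
        rw [ENNReal.tsum_mul_left, mul_comm]

/-- if a Radon measure `φ` gives positive mass to `B \ E^∞`, where
`E^∞` is the set of points with infinite upper `H^D`-derivative, then the Hausdorff
dimension of `B` is at least `D`. -/
theorem dimH_ge_of_pos_measure_off_infinite_derivative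
    {E : Type*} [MetricSpace E] [MeasurableSpace E] [BorelSpace E]
    (φ : Measure E) [IsLocallyFiniteMeasure φ] [φ.InnerRegular]
    (D : ℝ) (hD : 0 ≤ D)
    (Einf : Set E) (hEinf : Einf = {x : E | upperHDeriv φ D x = ∞})
    (B : Set E) (hB : MeasurableSet B) (hpos : 0 < φ (B \ Einf)) :
    ENNReal.ofReal D ≤ dimH B := by
  -- The good sets
  set A : ℕ → Set E := fun n => {x ∈ B \ Einf | ∀ F : Set E, IsClosed F → x ∈ F →
    EMetric.diam F ≤ ((n : ℝ≥0∞) + 1)⁻¹ → φ F ≤ ((n : ℝ≥0∞) + 1) * EMetric.diam F ^ D}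
    with hAdef
  -- `B \ Einf` is covered by the `A n`
  have hcover : B \ Einf ⊆ ⋃ n, A n := by
    intro x hx
    have hx' : upperHDeriv φ D x ≠ ∞ := by
      intro h
      exact hx.2 (hEinf ▸ h)
    have hι : (⨅ (δ : ℝ≥0∞) (_ : 0 < δ), ⨆ (F : Set E) (_ : IsClosed F) (_ : x ∈ F)
        (_ : EMetric.diam F ≤ δ), φ F / EMetric.diam F ^ D) ≠ ∞ := by
      intro h
      apply hx'
      rw [upperHDeriv, h, ENNReal.mul_top]
      simp [ENNReal.inv_eq_zero]
    rw [Ne, iInf_eq_top] at hι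
    push_neg at hι
    obtain ⟨δ, hδs⟩ := hι
    have hδ0 : 0 < δ := by
      by_contra h
      exact hδs (by rw [iInf_eq_top]; intro h'; exact absurd h' h)
    have hδs' : (⨆ (F : Set E) (_ : IsClosed F) (_ : x ∈ F)
        (_ : EMetric.diam F ≤ δ), φ F / EMetric.diam F ^ D) ≠ ∞ := by
      intro h
      exact hδs (by rw [iInf_eq_top]; intro _; exact h)
    obtain ⟨N, hN⟩ := ENNReal.exists_nat_gt hδs'
    obtain ⟨m, hm⟩ := ENNReal.exists_inv_nat_lt hδ0.ne'
    refine mem_iUnion.2 ⟨N + m, hx, fun F hF hxF hdF => ?_⟩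
    have hdFδ : EMetric.diam F ≤ δ := by
      refine le_trans hdF (le_of_lt (lt_of_le_of_lt ?_ hm))
      refine ENNReal.inv_le_inv.2 ?_
      have hmm : (m : ℝ≥0∞) ≤ ((N + m : ℕ) : ℝ≥0∞) := by exact_mod_cast Nat.le_add_left m N
      exact hmm.trans le_self_add
    have hratio : φ F / EMetric.diam F ^ D ≤ ((N + m : ℕ) : ℝ≥0∞) + 1 := by
      refine le_trans ?_ (le_trans hN.le ?_)
      · exact le_iSup₂_of_le F hF (le_iSup₂_of_le hxF hdFδ le_rfl)
      · exact_mod_cast le_trans (Nat.cast_le.2 (Nat.le_add_right N m)) le_self_add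
    by_cases hb : EMetric.diam F ^ D = 0
    · have : φ F = 0 := by
        by_contra h
        rw [hb, ENNReal.div_zero h] at hratio
        have := top_le_iff.1 hratio
        simp [ENNReal.add_eq_top] at this
      simp [this]
    · have hbt : EMetric.diam F ^ D ≠ ∞ := by
        refine ENNReal.rpow_ne_top_of_nonneg hD ?_
        exact ne_top_of_le_ne_top (by simp) hdF
      rw [ENNReal.div_le_iff hb hbt] at hratio
      exact hratio
  -- some `A n` has positive measure
  have hex : ∃ n, φ (A n) ≠ 0 := by
    by_contra h
    push_neg at h
    have : φ (B \ Einf) = 0 := by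
      refine le_antisymm (le_trans (measure_mono hcover) ?_) zero_le
      calc φ (⋃ n, A n) ≤ ∑' n, φ (A n) := measure_iUnion_le _
        _ = 0 := by simp [h]
    exact absurd this hpos.ne'
  obtain ⟨n, hn⟩ := hex
  -- Hausdorff measure of `B` is positive
  have hH : μH[D] B ≠ 0 := by
    have h1 : φ (A n) / ((n : ℝ≥0∞) + 1) ≤ μH[D] (A n) :=
      key_cover φ D n (A n) fun x hx => hx.2
    have h2 : 0 < φ (A n) / ((n : ℝ≥0∞) + 1) :=
      ENNReal.div_pos hn (by simp)
    have h3 : μH[D] (A n) ≤ μH[D] B :=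
      measure_mono fun x hx => hx.1.1
    exact (lt_of_lt_of_le (lt_of_lt_of_le h2 h1) h3).ne'
  have := le_dimH_of_hausdorffMeasure_ne_zero (d := D.toNNReal)
    (by rwa [Real.coe_toNNReal D hD])
  rwa [ENNReal.ofReal]
end

section
/- Let η be a random measure on a locally compact second countable Hausdorff metric space (E, ρ), with second-moment measure Λ on E × E defined by Λ(B × B') = E[η(B)η(B')]. Fix D ≥ 0 and r > 0, and suppose there exists a sequence of Borel sets E_n increasing to E such that ∫ ρ(x,y)^{-D} 1[x ∈ E_n] 1[ρ(x,y) < r] Λ(d(x,y)) < ∞ for every n. Then for every Borel set B ⊆ E, almost surely on the event {η(B) > 0}, one has dim_H B ≥ D. -/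
open MeasureTheory ENNReal Set

/-- Two measures agreeing (finitely) on an intersection-closed family agree on
countable unions of members of the family. -/
private lemma measure_iUnion_eq_of_mem_aux
    {X : Type*} [MeasurableSpace X] {μ ν : Measure X} {C : Set (Set X)}
    (hmeas : ∀ s ∈ C, MeasurableSet s)
    (hinter : ∀ s ∈ C, ∀ t ∈ C, s ∩ t ∈ C)
    (heq : ∀ s ∈ C, μ s = ν s) (hfin : ∀ s ∈ C, ν s ≠ ∞)
    (R : ℕ → Set X) (hR : ∀ i, R i ∈ C) :
    μ (⋃ i, R i) = ν (⋃ i, R i) := by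
  have key : ∀ k : ℕ, ∀ R : ℕ → Set X, (∀ i, R i ∈ C) →
      μ (⋃ i, ⋃ _ : i < k, R i) = ν (⋃ i, ⋃ _ : i < k, R i) := by
    intro k
    induction k with
    | zero => intro R hR; simp
    | succ k ih =>
      intro R hR
      have hW : MeasurableSet (⋃ i, ⋃ _ : i < k, R i) :=
        MeasurableSet.iUnion fun i => MeasurableSet.iUnion fun _ => hmeas _ (hR i)
      have hRk : MeasurableSet (R k) := hmeas _ (hR k)
      have hsucc : (⋃ i, ⋃ _ : i < k + 1, R i) = (⋃ i, ⋃ _ : i < k, R i) ∪ R k := by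
        ext x
        simp only [mem_iUnion, mem_union]
        constructor
        · rintro ⟨i, hi, hx⟩
          rcases Nat.lt_succ_iff_lt_or_eq.mp hi with h | h
          · exact Or.inl ⟨i, h, hx⟩
          · exact Or.inr (h ▸ hx)
        · rintro (⟨i, hi, hx⟩ | hx)
          · exact ⟨i, hi.trans (Nat.lt_succ_self k), hx⟩
          · exact ⟨k, Nat.lt_succ_self k, hx⟩
      have hint : (⋃ i, ⋃ _ : i < k, R i) ∩ R k = ⋃ i, ⋃ _ : i < k, (R i ∩ R k) := by
        simp [Set.iUnion_inter]
      have hμ := measure_union_add_inter (μ := μ) (⋃ i, ⋃ _ : i < k, R i) hRk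
      have hν := measure_union_add_inter (μ := ν) (⋃ i, ⋃ _ : i < k, R i) hRk
      have hWeq : μ (⋃ i, ⋃ _ : i < k, R i) = ν (⋃ i, ⋃ _ : i < k, R i) := ih R hR
      have hWReq : μ ((⋃ i, ⋃ _ : i < k, R i) ∩ R k) = ν ((⋃ i, ⋃ _ : i < k, R i) ∩ R k) := by
        rw [hint]; exact ih _ fun i => hinter _ (hR i) _ (hR k)
      have hfinWR : ν ((⋃ i, ⋃ _ : i < k, R i) ∩ R k) ≠ ∞ := by
        exact fun h => hfin _ (hR k) (top_le_iff.mp (h ▸ measure_mono inter_subset_right))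
      rw [hsucc]
      have h2 : ν ((⋃ i, ⋃ _ : i < k, R i) ∩ R k) + μ ((⋃ i, ⋃ _ : i < k, R i) ∪ R k)
          = ν ((⋃ i, ⋃ _ : i < k, R i) ∩ R k) + ν ((⋃ i, ⋃ _ : i < k, R i) ∪ R k) := by
        calc ν ((⋃ i, ⋃ _ : i < k, R i) ∩ R k) + μ ((⋃ i, ⋃ _ : i < k, R i) ∪ R k)
            = μ ((⋃ i, ⋃ _ : i < k, R i) ∪ R k) + μ ((⋃ i, ⋃ _ : i < k, R i) ∩ R k) := by
              rw [add_comm, hWReq]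
          _ = μ (⋃ i, ⋃ _ : i < k, R i) + μ (R k) := hμ
          _ = ν (⋃ i, ⋃ _ : i < k, R i) + ν (R k) := by rw [hWeq, heq _ (hR k)]
          _ = ν ((⋃ i, ⋃ _ : i < k, R i) ∩ R k) + ν ((⋃ i, ⋃ _ : i < k, R i) ∪ R k) := by
              rw [add_comm (ν ((⋃ i, ⋃ _ : i < k, R i) ∩ R k)) _]; exact hν.symm
      exact (ENNReal.add_right_inj hfinWR).mp h2
  have hcover : (⋃ i, R i) = ⋃ k, ⋃ i, ⋃ _ : i < k, R i := by
    ext x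
    simp only [mem_iUnion]
    exact ⟨fun ⟨i, hx⟩ => ⟨i + 1, i, Nat.lt_succ_self i, hx⟩, fun ⟨k, i, _, hx⟩ => ⟨i, hx⟩⟩
  have hmono : Monotone fun k => ⋃ i, ⋃ _ : i < k, R i := by
    intro a b hab x hx
    simp only [mem_iUnion] at hx ⊢
    obtain ⟨i, hi, hx⟩ := hx
    exact ⟨i, hi.trans_le hab, hx⟩
  rw [hcover, hmono.directed_le.measure_iUnion, hmono.directed_le.measure_iUnion]
  exact iSup_congr fun k => key k R hR


/-- Every open set in a product of second-countable spaces is a countable union of open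
rectangles contained in it. -/
private lemma open_eq_iUnion_prod {E : Type*} [TopologicalSpace E] [SecondCountableTopology E]
    {U : Set (E × E)} (hU : IsOpen U) :
    ∃ A A' : ℕ → Set E, (∀ i, IsOpen (A i)) ∧ (∀ i, IsOpen (A' i)) ∧
      (∀ i, A i ×ˢ A' i ⊆ U) ∧ (⋃ i, A i ×ˢ A' i) = U := by
  classical
  set T : Set (Set E × Set E) :=
    {st | st.1 ∈ TopologicalSpace.countableBasis E ∧ st.2 ∈ TopologicalSpace.countableBasis E ∧
      st.1 ×ˢ st.2 ⊆ U} ∪ {((∅ : Set E), (∅ : Set E))} with hT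
  have hTc : T.Countable := by
    refine Set.Countable.union ?_ (countable_singleton _)
    exact (((TopologicalSpace.countable_countableBasis E).prod
      (TopologicalSpace.countable_countableBasis E)).mono
      (fun st hst => Set.mem_prod.mpr ⟨hst.1, hst.2.1⟩))
  have hne : T.Nonempty := ⟨((∅ : Set E), (∅ : Set E)), Or.inr rfl⟩
  obtain ⟨f, hf⟩ := hTc.exists_eq_range hne
  have hmem : ∀ i, f i ∈ T := fun i => hf ▸ Set.mem_range_self i
  have hopen : ∀ st ∈ T, IsOpen st.1 ∧ IsOpen st.2 := by
    rintro st (⟨h1, h2, -⟩ | h)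
    · exact ⟨TopologicalSpace.isOpen_of_mem_countableBasis h1,
        TopologicalSpace.isOpen_of_mem_countableBasis h2⟩
    · simp only [mem_singleton_iff] at h
      rw [h]; exact ⟨isOpen_empty, isOpen_empty⟩
  have hsub : ∀ st ∈ T, st.1 ×ˢ st.2 ⊆ U := by
    rintro st (⟨-, -, h⟩ | h)
    · exact h
    · simp only [mem_singleton_iff] at h
      rw [h]; simp
  refine ⟨fun i => (f i).1, fun i => (f i).2, fun i => (hopen _ (hmem i)).1,
    fun i => (hopen _ (hmem i)).2, fun i => hsub _ (hmem i), ?_⟩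
  apply Set.Subset.antisymm
  · exact Set.iUnion_subset fun i => hsub _ (hmem i)
  · intro p hp
    obtain ⟨v, hv, hpv, hvU⟩ :=
      ((TopologicalSpace.isBasis_countableBasis E).prod
        (TopologicalSpace.isBasis_countableBasis E)).exists_subset_of_mem_open hp hU
    obtain ⟨s, hs, t, ht, rfl⟩ := hv
    have : (s, t) ∈ T := Or.inl ⟨hs, ht, hvU⟩
    rw [hf] at this
    obtain ⟨i, hi⟩ := this
    exact Set.mem_iUnion.mpr ⟨i, by simp only [hi]; exact hpv⟩

set_option maxHeartbeats 800000 in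
/-- Frostman-type energy criterion: a measure of positive finite mass on `A ⊆ B` with finite
truncated `D`-energy forces `dimH B ≥ D`. -/
private lemma frostman_aux {E : Type*} [MetricSpace E] [SecondCountableTopology E]
    [MeasurableSpace E] [BorelSpace E]
    (μ : Measure E) [SigmaFinite μ] {D r : ℝ} (hD : 0 < D) (hr : 0 < r)
    {B A : Set E} (hA : MeasurableSet A) (hAB : A ⊆ B)
    (hpos : 0 < μ A) (hfin : μ A ≠ ∞)
    (henergy : ∫⁻ p in (A ×ˢ A) ∩ {p : E × E | edist p.1 p.2 < ENNReal.ofReal r},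
      (edist p.1 p.2) ^ (-D) ∂(μ.prod μ) ≠ ∞) :
    ENNReal.ofReal D ≤ dimH B := by
  classical
  set ν : Measure E := μ.restrict A with hν
  haveI : IsFiniteMeasure ν := ⟨by rw [hν, Measure.restrict_apply_univ]; exact hfin.lt_top⟩
  set S : Set (E × E) := {p : E × E | edist p.1 p.2 < ENNReal.ofReal r} with hS
  have hSmeas : MeasurableSet S := measurableSet_lt measurable_edist measurable_const
  have hkermeas : Measurable fun p : E × E => (edist p.1 p.2) ^ (-D) :=
    ENNReal.continuous_rpow_const.measurable.comp measurable_edist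
  set F : E × E → ℝ≥0∞ := S.indicator (fun p => (edist p.1 p.2) ^ (-D)) with hF
  have hFmeas : Measurable F := hkermeas.indicator hSmeas
  set g : E → ℝ≥0∞ := fun x => ∫⁻ y, F (x, y) ∂ν with hg
  have hgmeas : Measurable g := by
    apply Measurable.lintegral_prod_right (f := fun x y => F (x, y))
    exact hFmeas
  have hgint : ∫⁻ x, g x ∂ν ≠ ∞ := by
    have h1 : ∫⁻ x, g x ∂ν
        = ∫⁻ p in (A ×ˢ A) ∩ S, (edist p.1 p.2) ^ (-D) ∂(μ.prod μ) := by
      calc ∫⁻ x, g x ∂ν = ∫⁻ p, F p ∂(ν.prod ν) :=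
            (lintegral_prod F hFmeas.aemeasurable).symm
        _ = ∫⁻ p, F p ∂((μ.prod μ).restrict (A ×ˢ A)) := by
            rw [hν, Measure.prod_restrict]
        _ = ∫⁻ p in S, (edist p.1 p.2) ^ (-D) ∂((μ.prod μ).restrict (A ×ˢ A)) := by
            rw [hF, lintegral_indicator hSmeas]
        _ = ∫⁻ p in (A ×ˢ A) ∩ S, (edist p.1 p.2) ^ (-D) ∂(μ.prod μ) := by
            rw [Measure.restrict_restrict hSmeas, Set.inter_comm]
    rw [h1]; exact henergy
  have hae : ∀ᵐ x ∂ν, g x < ∞ := ae_lt_top hgmeas hgint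
  -- choose a finiteness level t
  have hνuniv : ν univ = μ A := by rw [hν, Measure.restrict_apply_univ]
  have hcoverg : ν {x | g x < ∞} = ν univ := by
    apply le_antisymm (measure_mono (subset_univ _))
    have hunion : ({x | g x < ∞} ∪ {x | ¬ g x < ∞}) = univ := by
      ext x; simp only [mem_union, mem_setOf_eq, mem_univ, iff_true]; exact em _
    calc ν univ = ν ({x | g x < ∞} ∪ {x | ¬ g x < ∞}) := by rw [hunion]
      _ ≤ ν {x | g x < ∞} + ν {x | ¬ g x < ∞} := measure_union_le _ _
      _ = ν {x | g x < ∞} := by rw [ae_iff.mp hae, add_zero]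
  have hball_union : {x | g x < ∞} = ⋃ k : ℕ, {x | g x ≤ (k : ℝ≥0∞)} := by
    ext x
    simp only [mem_setOf_eq, mem_iUnion]
    constructor
    · intro h
      obtain ⟨k, hk⟩ := ENNReal.exists_nat_gt h.ne
      exact ⟨k, hk.le⟩
    · rintro ⟨k, hk⟩
      exact hk.trans_lt (by simp)
  obtain ⟨k, hk⟩ : ∃ k : ℕ, 0 < ν {x | g x ≤ (k : ℝ≥0∞)} := by
    by_contra h
    push_neg at h
    have h0 : ∀ k : ℕ, ν {x | g x ≤ (k : ℝ≥0∞)} = 0 := fun k => le_antisymm (h k) zero_le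
    have : ν {x | g x < ∞} = 0 := by
      rw [hball_union]
      exact le_antisymm ((measure_iUnion_le _).trans (by simp [h0])) zero_le
    rw [hcoverg, hνuniv] at this
    exact hpos.ne' this
  set t : ℝ≥0∞ := (k : ℝ≥0∞) + 1 with ht
  have ht0 : t ≠ 0 := by simp [ht]
  have htT : t ≠ ∞ := by simp [ht]
  set A' : Set E := A ∩ {x | g x ≤ t} with hA'
  have hA'meas : MeasurableSet A' := hA.inter (measurableSet_le hgmeas measurable_const)
  have hA'A : A' ⊆ A := inter_subset_left
  have hA'pos : 0 < μ A' := by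
    have h1 : ν {x | g x ≤ (k : ℝ≥0∞)} ≤ ν {x | g x ≤ t} :=
      measure_mono fun x hx => show g x ≤ t from le_trans hx le_self_add
    have h2 : ν {x | g x ≤ t} = μ A' := by
      rw [hν, Measure.restrict_apply' hA, hA', Set.inter_comm]
    exact lt_of_lt_of_le hk (h1.trans h2.le)
  set σ : Measure E := μ.restrict A' with hσ
  -- ball estimate
  have hballν : ∀ x ∈ A', ∀ ε : ℝ≥0∞, 0 < ε → ε ≤ ENNReal.ofReal r →
      ν (EMetric.ball x ε) ≤ t * ε ^ D := by
    intro x hx ε hε hεr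
    have hεT : ε ≠ ∞ := (hεr.trans_lt ofReal_lt_top).ne
    have hker : ∀ y ∈ EMetric.ball x ε, ε ^ (-D) ≤ F (x, y) := by
      intro y hy
      have hxy : edist x y < ε := by rw [edist_comm]; exact EMetric.mem_ball.mp hy
      have hmem : (x, y) ∈ S := hxy.trans_le hεr
      have hFx : F (x, y) = (edist x y) ^ (-D) := indicator_of_mem hmem _
      rw [hFx, ENNReal.rpow_neg, ENNReal.rpow_neg]
      exact ENNReal.inv_le_inv.mpr (ENNReal.rpow_le_rpow hxy.le hD.le)
    have h2 : ε ^ (-D) * ν (EMetric.ball x ε) ≤ g x := by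
      calc ε ^ (-D) * ν (EMetric.ball x ε)
          = ∫⁻ _ in EMetric.ball x ε, ε ^ (-D) ∂ν := (setLIntegral_const _ _).symm
        _ ≤ ∫⁻ y in EMetric.ball x ε, F (x, y) ∂ν :=
            setLIntegral_mono' EMetric.isOpen_ball.measurableSet hker
        _ ≤ g x := setLIntegral_le_lintegral _ _
    have hgx : g x ≤ t := hx.2
    have hpow : ε ^ D * ε ^ (-D) = 1 := by
      rw [← ENNReal.rpow_add _ _ hε.ne' hεT]
      simp
    calc ν (EMetric.ball x ε) = ε ^ D * ε ^ (-D) * ν (EMetric.ball x ε) := by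
          rw [hpow, one_mul]
      _ = ε ^ D * (ε ^ (-D) * ν (EMetric.ball x ε)) := by rw [mul_assoc]
      _ ≤ ε ^ D * g x := mul_le_mul_right h2 _
      _ ≤ ε ^ D * t := mul_le_mul_right hgx _
      _ = t * ε ^ D := mul_comm _ _
  have hballσ : ∀ x ∈ A', ∀ ε : ℝ≥0∞, 0 < ε → ε ≤ ENNReal.ofReal r →
      σ (EMetric.ball x ε) ≤ t * ε ^ D := by
    intro x hx ε hε hεr
    refine le_trans ?_ (hballν x hx ε hε hεr)
    rw [hσ, hν, Measure.restrict_apply' hA'meas, Measure.restrict_apply' hA]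
    exact measure_mono (inter_subset_inter_right _ hA'A)
  set c : ℝ≥0∞ := t * (2 : ℝ≥0∞) ^ D with hc
  have h2D0 : (0:ℝ≥0∞) < (2 : ℝ≥0∞) ^ D := ENNReal.rpow_pos (by norm_num) (by norm_num)
  have h2DT : (2 : ℝ≥0∞) ^ D ≠ ∞ := ENNReal.rpow_ne_top_of_nonneg hD.le (by norm_num)
  have hc0 : c ≠ 0 := mul_ne_zero ht0 h2D0.ne'
  have hcT : c ≠ ∞ := ENNReal.mul_ne_top htT h2DT
  -- the singleton estimate
  have hsingleton : ∀ x ∈ A', σ {x} = 0 := by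
    intro x hx
    set b : ℝ≥0∞ := ((2 : ℝ≥0∞)⁻¹) ^ D with hb
    have hb1 : b < 1 := ENNReal.rpow_lt_one (by simp [ENNReal.inv_lt_one]) hD
    have hrD : (ENNReal.ofReal r) ^ D ≠ ∞ := ENNReal.rpow_ne_top_of_nonneg hD.le ofReal_ne_top
    have htend : Filter.Tendsto (fun n : ℕ => (t * (ENNReal.ofReal r) ^ D) * b ^ n)
        Filter.atTop (nhds 0) := by
      have := ENNReal.Tendsto.const_mul (a := t * (ENNReal.ofReal r) ^ D)
        (ENNReal.tendsto_pow_atTop_nhds_zero_of_lt_one hb1) (Or.inr (ENNReal.mul_ne_top htT hrD))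
      simpa using this
    have hbound : ∀ n : ℕ, σ {x} ≤ (t * (ENNReal.ofReal r) ^ D) * b ^ n := by
      intro n
      set ε : ℝ≥0∞ := ENNReal.ofReal r * ((2 : ℝ≥0∞)⁻¹) ^ n with hε
      have hr0 : ENNReal.ofReal r ≠ 0 := (ENNReal.ofReal_pos.mpr hr).ne'
      have hε0 : 0 < ε := by
        rw [hε]
        exact ENNReal.mul_pos hr0 (by simp)
      have hεr : ε ≤ ENNReal.ofReal r := by
        rw [hε]
        exact mul_le_of_le_one_right' (pow_le_one' (by simp [ENNReal.inv_le_one]) n)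
      have h1 : σ {x} ≤ σ (EMetric.ball x ε) :=
        measure_mono (Set.singleton_subset_iff.mpr (EMetric.mem_ball_self hε0))
      have hεD : ε ^ D = (ENNReal.ofReal r) ^ D * b ^ n := by
        rw [hε, ENNReal.mul_rpow_of_nonneg _ _ hD.le, hb,
          ← ENNReal.rpow_natCast ((2 : ℝ≥0∞)⁻¹) n, ← ENNReal.rpow_natCast (((2 : ℝ≥0∞)⁻¹) ^ D) n,
          ← ENNReal.rpow_mul, ← ENNReal.rpow_mul, mul_comm (n : ℝ) D]
      calc σ {x} ≤ σ (EMetric.ball x ε) := h1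
        _ ≤ t * ε ^ D := hballσ x hx ε hε0 hεr
        _ = t * ENNReal.ofReal r ^ D * b ^ n := by rw [hεD, ← mul_assoc]
    have := ge_of_tendsto' htend hbound
    exact le_antisymm this zero_le
  -- mass distribution principle
  have hmass : ∀ s : Set E, EMetric.diam s ≤ ENNReal.ofReal r / 2 →
      (c⁻¹ • σ) s ≤ EMetric.diam s ^ D := by
    intro s hdiam
    rcases Set.eq_empty_or_nonempty (s ∩ A') with hemp | ⟨x, hxs, hxA'⟩
    · have : σ s = 0 := by
        rw [hσ, Measure.restrict_apply' hA'meas, hemp]; simp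
      simp [Measure.smul_apply, this]
    rcases eq_or_ne (EMetric.diam s) 0 with hδ | hδ
    · have hsx : s ⊆ {x} := by
        intro y hy
        have h1 := EMetric.edist_le_diam_of_mem hy hxs
        replace h1 := h1.trans_eq hδ
        exact mem_singleton_iff.mpr (edist_le_zero.mp h1)
      have : σ s ≤ σ {x} := measure_mono hsx
      rw [hsingleton x hxA'] at this
      simp only [Measure.smul_apply, smul_eq_mul]
      rw [le_antisymm this zero_le]
      simp
    · set δ : ℝ≥0∞ := EMetric.diam s with hδd
      have hδT : δ ≠ ∞ :=
        (hdiam.trans_lt (lt_of_le_of_lt ENNReal.half_le_self ofReal_lt_top)).ne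
      have h2δr : 2 * δ ≤ ENNReal.ofReal r := by
        calc 2 * δ ≤ 2 * (ENNReal.ofReal r / 2) := mul_le_mul_right hdiam _
          _ = ENNReal.ofReal r := ENNReal.mul_div_cancel' (by norm_num) (by norm_num)
      have h2δ0 : 0 < 2 * δ := by
        refine ENNReal.mul_pos (by norm_num) hδ
      have hsub : s ⊆ EMetric.ball x (2 * δ) := by
        intro y hy
        have h1 : edist y x ≤ δ := EMetric.edist_le_diam_of_mem hy hxs
        refine EMetric.mem_ball.mpr (h1.trans_lt ?_)
        rw [two_mul]
        exact ENNReal.lt_add_right hδT hδ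
      have h3 : σ s ≤ c * δ ^ D := by
        calc σ s ≤ σ (EMetric.ball x (2 * δ)) := measure_mono hsub
          _ ≤ t * (2 * δ) ^ D := hballσ x hxA' _ h2δ0 h2δr
          _ = c * δ ^ D := by
            rw [ENNReal.mul_rpow_of_nonneg _ _ hD.le, hc, mul_assoc]
      calc (c⁻¹ • σ) s = c⁻¹ * σ s := by simp [Measure.smul_apply]
        _ ≤ c⁻¹ * (c * δ ^ D) := mul_le_mul_right h3 _
        _ = δ ^ D := by rw [← mul_assoc, ENNReal.inv_mul_cancel hc0 hcT, one_mul]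
  have hle : (c⁻¹ • σ) ≤ μH[D] :=
    Measure.le_hausdorffMeasure D _ (ENNReal.ofReal r / 2)
      (ENNReal.div_pos ((ENNReal.ofReal_pos.mpr hr).ne') (by norm_num)) hmass
  have hHB : μH[D] B ≠ 0 := by
    have h1 : (c⁻¹ • σ) B ≤ μH[D] B := hle B
    have h2 : σ B = μ A' := by
      rw [hσ, Measure.restrict_apply' hA'meas, Set.inter_eq_self_of_subset_right (hA'A.trans hAB)]
    have h3 : (0:ℝ≥0∞) < c⁻¹ * μ A' :=
      ENNReal.mul_pos (ENNReal.inv_ne_zero.mpr hcT) hA'pos.ne'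
    have h4 : (0:ℝ≥0∞) < (c⁻¹ • σ) B := by
      simpa [Measure.smul_apply, h2] using h3
    exact (h4.trans_le h1).ne'
  have hcoe : ((D.toNNReal : ℝ)) = D := Real.coe_toNNReal D hD.le
  have hHB' : μH[(D.toNNReal : ℝ)] B ≠ 0 := by rw [hcoe]; exact hHB
  have hfinal := le_dimH_of_hausdorffMeasure_ne_zero (d := D.toNNReal) hHB'
  simpa [ENNReal.ofReal] using hfinal

set_option maxHeartbeats 1600000 in
/-- Let `η` be a random measure on a locally compact second countable
Hausdorff metric space `E`, with second-moment measure `Λ` on `E × E` determined by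
`Λ(B × B') = 𝔼[η(B) η(B')]`. If for some `D ≥ 0`, `r > 0` and a sequence of Borel
sets `E_n ↑ E` the truncated `D`-energy
`∫ ρ(x,y)^{-D} 1[x ∈ E_n] 1[ρ(x,y) < r] Λ(d(x,y))` is finite for each `n`, then for
every Borel set `B`, almost surely on `{η(B) > 0}` one has `dim_H B ≥ D`. -/
theorem dimH_ge_of_secondMoment_energy_finite
    {E : Type*} [MetricSpace E] [SecondCountableTopology E] [LocallyCompactSpace E]
    [MeasurableSpace E] [BorelSpace E]
    {Ω : Type*} [MeasurableSpace Ω] (P : Measure Ω) [IsProbabilityMeasure P]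
    (η : Ω → Measure E) (hη : ∀ A : Set E, MeasurableSet A → Measurable fun ω => η ω A)
    (hRadon : ∀ ω, IsLocallyFiniteMeasure (η ω) ∧ (η ω).InnerRegular)
    (Λ : Measure (E × E))
    (hΛ : ∀ A A' : Set E, MeasurableSet A → MeasurableSet A' →
      Λ (A ×ˢ A') = ∫⁻ ω, η ω A * η ω A' ∂P)
    (D : ℝ) (hD : 0 ≤ D) (r : ℝ) (hr : 0 < r)
    (En : ℕ → Set E) (hEnMeas : ∀ n, MeasurableSet (En n)) (hEnMono : Monotone En)
    (hEnUnion : (⋃ n, En n) = univ)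
    (hEnergy : ∀ n, ∫⁻ p in {p : E × E | p.1 ∈ En n ∧ edist p.1 p.2 < ENNReal.ofReal r},
      (edist p.1 p.2) ^ (-D) ∂Λ < ∞)
    (B : Set E) (hB : MeasurableSet B) :
    ∀ᵐ ω ∂P, 0 < η ω B → ENNReal.ofReal D ≤ dimH B := by
  classical
  rcases eq_or_lt_of_le hD with hD0 | hD'
  · exact Filter.Eventually.of_forall fun ω _ => by simp [← hD0]
  have hSF : ∀ ω, SigmaFinite (η ω) := fun ω => by
    haveI := (hRadon ω).1; infer_instance
  set K : ℕ → Set E := compactCovering E with hK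
  have hKmeas : ∀ m, MeasurableSet (K m) := fun m => (isCompact_compactCovering E m).measurableSet
  set Gset : ℕ → Set (E × E) :=
    fun n => {p : E × E | p.1 ∈ En n ∧ edist p.1 p.2 < ENNReal.ofReal r} with hGset
  set U : Set (E × E) := {p : E × E | edist p.1 p.2 < ENNReal.ofReal r} with hU
  have hUopen : IsOpen U := isOpen_lt continuous_edist continuous_const
  have hUmeas : MeasurableSet U := hUopen.measurableSet
  have hGmeas : ∀ n, MeasurableSet (Gset n) := fun n => by
    have hid : Gset n = (Prod.fst ⁻¹' En n) ∩ U := rfl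
    rw [hid]
    exact (measurable_fst (hEnMeas n)).inter hUmeas
  -- measurability of the product evaluations
  have hprodmeas : ∀ S : Set (E × E), MeasurableSet S →
      Measurable (fun ω => (η ω).prod (η ω) S) := by
    intro S hS
    set θ : ℕ → ℕ → Ω → Measure E := fun m c ω =>
      if η ω (K m) ≤ (c : ℝ≥0∞) then (η ω).restrict (K m) else 0 with hθdef
    have hθmeas : ∀ m c, Measurable (θ m c) := by
      intro m c
      apply Measure.measurable_of_measurable_coe
      intro A hA
      have hrw : (fun ω => θ m c ω A)
          = fun ω => if η ω (K m) ≤ (c : ℝ≥0∞) then η ω (A ∩ K m) else 0 := by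
        funext ω
        simp only [hθdef]
        by_cases h : η ω (K m) ≤ (c : ℝ≥0∞) <;>
          simp [h, Measure.restrict_apply hA]
      rw [hrw]
      exact Measurable.ite (measurableSet_le (hη _ (hKmeas m)) measurable_const)
        (hη _ (hA.inter (hKmeas m))) measurable_const
    have hθfin : ∀ m c ω, θ m c ω univ ≤ (c : ℝ≥0∞) := by
      intro m c ω
      simp only [hθdef]
      by_cases h : η ω (K m) ≤ (c : ℝ≥0∞)
      · simpa [h, Measure.restrict_apply_univ] using h
      · simp [h]
    have hprodθ : ∀ m c, Measurable (fun ω => ((θ m c ω).prod (θ m c ω)) S) := by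
      intro m c
      let κ : ProbabilityTheory.Kernel Ω E := ⟨θ m c, hθmeas m c⟩
      haveI : ProbabilityTheory.IsFiniteKernel κ :=
        ProbabilityTheory.IsFiniteKernel.mk
          ⟨(c : ℝ≥0∞) + 1, by simp, fun ω => (hθfin m c ω).trans le_self_add⟩
      have hre : (fun ω => ((θ m c ω).prod (θ m c ω)) S)
          = fun ω => ((κ.prod κ) ω) S := by
        funext ω
        rw [ProbabilityTheory.Kernel.prod_apply]
        rfl
      rw [hre]
      exact ProbabilityTheory.Kernel.measurable_coe _ hS
    have hrepr : ∀ ω, (η ω).prod (η ω) S = ⨆ m, ⨆ c, ((θ m c ω).prod (θ m c ω)) S := by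
      intro ω
      haveI := (hRadon ω).1
      haveI : SigmaFinite (η ω) := hSF ω
      have hKfin : ∀ m, η ω (K m) ≠ ∞ := fun m =>
        ((isCompact_compactCovering E m).measure_lt_top).ne
      have hinner : ∀ m, (⨆ c : ℕ, ((θ m c ω).prod (θ m c ω)) S)
          = ((η ω).restrict (K m)).prod ((η ω).restrict (K m)) S := by
        intro m
        apply le_antisymm
        · apply iSup_le
          intro c
          simp only [hθdef]
          by_cases h : η ω (K m) ≤ (c : ℝ≥0∞)
          · simp [h]
          · simp [h, Measure.zero_prod]
        · obtain ⟨c, hc⟩ := ENNReal.exists_nat_gt (hKfin m)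
          refine le_iSup_of_le c ?_
          simp only [hθdef]
          simp [hc.le]
      have houter : (⨆ m, ((η ω).restrict (K m)).prod ((η ω).restrict (K m)) S)
          = (η ω).prod (η ω) S := by
        have h1 : ∀ m, ((η ω).restrict (K m)).prod ((η ω).restrict (K m)) S
            = (η ω).prod (η ω) (S ∩ (K m ×ˢ K m)) := by
          intro m
          rw [Measure.prod_restrict, Measure.restrict_apply hS]
        simp_rw [h1]
        have hmono : Monotone fun m => S ∩ (K m ×ˢ K m) := by
          intro a b hab
          exact inter_subset_inter_right _
            (Set.prod_mono (compactCovering_subset E hab) (compactCovering_subset E hab))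
        rw [← hmono.directed_le.measure_iUnion, ← Set.inter_iUnion]
        have hKuniv : (⋃ m, (K m ×ˢ K m)) = univ := by
          ext p
          simp only [mem_iUnion, mem_univ, iff_true, Set.mem_prod]
          have h1 : p.1 ∈ ⋃ m, K m := by rw [hK, iUnion_compactCovering]; trivial
          have h2 : p.2 ∈ ⋃ m, K m := by rw [hK, iUnion_compactCovering]; trivial
          obtain ⟨m1, hm1⟩ := mem_iUnion.mp h1
          obtain ⟨m2, hm2⟩ := mem_iUnion.mp h2
          exact ⟨max m1 m2, compactCovering_subset E (le_max_left _ _) hm1,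
            compactCovering_subset E (le_max_right _ _) hm2⟩
        rw [hKuniv, inter_univ]
      rw [← houter]
      exact (iSup_congr hinner).symm
    have hfe : (fun ω => (η ω).prod (η ω) S)
        = fun ω => ⨆ m, ⨆ c, ((θ m c ω).prod (θ m c ω)) S := funext hrepr
    rw [hfe]
    exact Measurable.iSup fun m => Measurable.iSup fun c => hprodθ m c
  have hmprod : Measurable fun ω => (η ω).prod (η ω) :=
    Measure.measurable_of_measurable_coe _ hprodmeas
  set L : Measure (E × E) := P.bind (fun ω => (η ω).prod (η ω)) with hL
  have hLrect : ∀ V W : Set E, MeasurableSet V → MeasurableSet W →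
      L (V ×ˢ W) = Λ (V ×ˢ W) := by
    intro V W hV hW
    rw [hL, Measure.bind_apply (hV.prod hW) hmprod.aemeasurable, hΛ V W hV hW]
    apply lintegral_congr
    intro ω
    haveI : SigmaFinite (η ω) := hSF ω
    rw [Measure.prod_prod]
  -- key a.e. finiteness of the quenched energies
  have key : ∀ n, ∀ᵐ ω ∂P, ∫⁻ p in Gset n,
      (edist p.1 p.2) ^ (-D) ∂((η ω).prod (η ω)) < ∞ := by
    intro n
    -- Λ is finite on Gset n
    have hGfin : Λ (Gset n) ≠ ∞ := by
      intro htop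
      have h1 : (ENNReal.ofReal r) ^ (-D) * Λ (Gset n)
          ≤ ∫⁻ p in Gset n, (edist p.1 p.2) ^ (-D) ∂Λ := by
        rw [← setLIntegral_const]
        refine setLIntegral_mono' (hGmeas n) ?_
        intro p hp
        rw [ENNReal.rpow_neg, ENNReal.rpow_neg]
        exact ENNReal.inv_le_inv.mpr (ENNReal.rpow_le_rpow hp.2.le hD)
      rw [htop, ENNReal.mul_top
        (ENNReal.rpow_pos (ENNReal.ofReal_pos.mpr hr) ofReal_ne_top).ne'] at h1
      exact (hEnergy n).ne (top_le_iff.mp h1)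
    -- L and Λ agree on rectangles intersected with Gset n
    have hGdecomp : Gset n = (Prod.fst ⁻¹' En n) ∩ U := rfl
    have claim : ∀ V W : Set E, MeasurableSet V → MeasurableSet W →
        L ((V ×ˢ W) ∩ Gset n) = Λ ((V ×ˢ W) ∩ Gset n) := by
      intro V W hV hW
      obtain ⟨A, A', hAop, hA'op, hAU, hAUnion⟩ := open_eq_iUnion_prod hUopen
      set C : Set (Set (E × E)) :=
        {T | (∃ V₁ W₁ : Set E, MeasurableSet V₁ ∧ MeasurableSet W₁ ∧ T = V₁ ×ˢ W₁) ∧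
          T ⊆ Gset n} with hC
      have hcover : ((V ×ˢ W) ∩ Gset n)
          = ⋃ i, ((V ∩ En n ∩ A i) ×ˢ (W ∩ A' i)) := by
        rw [hGdecomp, ← hAUnion]
        ext p
        simp only [mem_inter_iff, Set.mem_prod, mem_iUnion, mem_preimage, mem_inter_iff]
        constructor
        · rintro ⟨⟨h1, h2⟩, h3, i, hi⟩
          have hi' : p ∈ A i ×ˢ A' i := hi
          exact ⟨i, ⟨⟨h1, h3⟩, hi'.1⟩, h2, hi'.2⟩
        · rintro ⟨i, ⟨⟨h1, h3⟩, h4⟩, h2, h5⟩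
          exact ⟨⟨h1, h2⟩, h3, ⟨i, ⟨h4, h5⟩⟩⟩
      have hmem : ∀ i, ((V ∩ En n ∩ A i) ×ˢ (W ∩ A' i)) ∈ C := by
        intro i
        constructor
        · exact ⟨V ∩ En n ∩ A i, W ∩ A' i,
            (hV.inter (hEnMeas n)).inter (hAop i).measurableSet,
            hW.inter (hA'op i).measurableSet, rfl⟩
        · rintro p ⟨⟨⟨-, h1⟩, h2⟩, -, h3⟩
          exact ⟨h1, hAU i ⟨h2, h3⟩⟩
      rw [hcover]
      refine measure_iUnion_eq_of_mem_aux (C := C) ?_ ?_ ?_ ?_ _ hmem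
      · rintro s ⟨⟨V₁, W₁, hV₁, hW₁, rfl⟩, -⟩
        exact hV₁.prod hW₁
      · rintro s ⟨⟨V₁, W₁, hV₁, hW₁, rfl⟩, hs⟩ t ⟨⟨V₂, W₂, hV₂, hW₂, rfl⟩, ht⟩
        constructor
        · exact ⟨V₁ ∩ V₂, W₁ ∩ W₂, hV₁.inter hV₂, hW₁.inter hW₂, Set.prod_inter_prod⟩
        · exact (inter_subset_left).trans hs
      · rintro s ⟨⟨V₁, W₁, hV₁, hW₁, rfl⟩, -⟩
        exact hLrect V₁ W₁ hV₁ hW₁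
      · rintro s ⟨-, hs⟩
        exact fun h => hGfin (top_le_iff.mp (h ▸ measure_mono hs))
    have hLG : L (Gset n) = Λ (Gset n) := by
      have h1 := claim univ univ MeasurableSet.univ MeasurableSet.univ
      simpa [Set.univ_prod_univ] using h1
    -- the restricted measures agree
    have hrestr : L.restrict (Gset n) = Λ.restrict (Gset n) := by
      haveI : IsFiniteMeasure (L.restrict (Gset n)) := by
        constructor
        rw [Measure.restrict_apply_univ, hLG]
        exact hGfin.lt_top
      refine ext_of_generate_finite _ generateFrom_prod.symm isPiSystem_prod ?_ ?_
      · rintro s ⟨V, hV, W, hW, rfl⟩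
        simp only [mem_setOf_eq] at hV hW
        rw [Measure.restrict_apply (hV.prod hW), Measure.restrict_apply (hV.prod hW)]
        exact claim V W hV hW
      · rw [Measure.restrict_apply_univ, Measure.restrict_apply_univ]
        exact hLG
    -- transfer the energy bound through L = bind
    have hindmeas : Measurable ((Gset n).indicator fun p : E × E => (edist p.1 p.2) ^ (-D)) :=
      (ENNReal.continuous_rpow_const.measurable.comp measurable_edist).indicator (hGmeas n)
    have hLenergy : ∫⁻ p in Gset n, (edist p.1 p.2) ^ (-D) ∂L ≠ ∞ := by
      rw [show ∫⁻ p in Gset n, (edist p.1 p.2) ^ (-D) ∂L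
          = ∫⁻ p, (edist p.1 p.2) ^ (-D) ∂(L.restrict (Gset n)) from rfl, hrestr]
      exact (hEnergy n).ne
    have hbind : ∫⁻ p in Gset n, (edist p.1 p.2) ^ (-D) ∂L
        = ∫⁻ ω, ∫⁻ p, (Gset n).indicator (fun p => (edist p.1 p.2) ^ (-D)) p
            ∂((η ω).prod (η ω)) ∂P := by
      rw [← lintegral_indicator (hGmeas n), hL, Measure.lintegral_bind hmprod.aemeasurable hindmeas.aemeasurable]
    have hFmeas2 : Measurable fun ω =>
        ∫⁻ p, (Gset n).indicator (fun p => (edist p.1 p.2) ^ (-D)) p ∂((η ω).prod (η ω)) :=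
      (Measure.measurable_lintegral hindmeas).comp hmprod
    have hae : ∀ᵐ ω ∂P, ∫⁻ p, (Gset n).indicator (fun p => (edist p.1 p.2) ^ (-D)) p
        ∂((η ω).prod (η ω)) < ∞ := by
      apply ae_lt_top hFmeas2
      rw [← hbind]
      exact hLenergy
    filter_upwards [hae] with ω hω
    rwa [lintegral_indicator (hGmeas n)] at hω
  -- conclude
  filter_upwards [ae_all_iff.mpr key] with ω hω hpos
  haveI := (hRadon ω).1
  haveI : SigmaFinite (η ω) := hSF ω
  set μ : Measure E := η ω with hμ
  -- find a piece of positive finite measure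
  have hBdecomp : B = ⋃ n, B ∩ En n := by
    rw [← Set.inter_iUnion, hEnUnion, inter_univ]
  have hmono1 : Monotone fun n => B ∩ En n := fun a b hab =>
    inter_subset_inter_right _ (hEnMono hab)
  obtain ⟨n, hn⟩ : ∃ n, 0 < μ (B ∩ En n) := by
    by_contra h
    push_neg at h
    have h0 : ∀ n, μ (B ∩ En n) = 0 := fun n => le_antisymm (h n) zero_le
    have : μ B = 0 := by
      rw [hBdecomp, hmono1.directed_le.measure_iUnion]
      simp [h0]
    exact hpos.ne' this
  have hmono2 : Monotone fun k => B ∩ En n ∩ spanningSets μ k := fun a b hab =>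
    inter_subset_inter_right _ (monotone_spanningSets μ hab)
  obtain ⟨k, hk⟩ : ∃ k, 0 < μ (B ∩ En n ∩ spanningSets μ k) := by
    by_contra h
    push_neg at h
    have h0 : ∀ k, μ (B ∩ En n ∩ spanningSets μ k) = 0 := fun k =>
      le_antisymm (h k) zero_le
    have : μ (B ∩ En n) = 0 := by
      have hdec : B ∩ En n = ⋃ k, (B ∩ En n ∩ spanningSets μ k) := by
        rw [← Set.inter_iUnion, iUnion_spanningSets, inter_univ]
      rw [hdec, hmono2.directed_le.measure_iUnion]
      simp [h0]
    exact hn.ne' this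
  set A : Set E := B ∩ En n ∩ spanningSets μ k with hA
  have hAmeas : MeasurableSet A := (hB.inter (hEnMeas n)).inter (measurableSet_spanningSets μ k)
  have hAB : A ⊆ B := fun x hx => hx.1.1
  have hAfin : μ A ≠ ∞ :=
    ((measure_mono inter_subset_right).trans_lt (measure_spanningSets_lt_top μ k)).ne
  have hsub : (A ×ˢ A) ∩ {p : E × E | edist p.1 p.2 < ENNReal.ofReal r} ⊆ Gset n := by
    rintro p ⟨⟨h1, -⟩, h2⟩
    exact ⟨h1.1.2, h2⟩
  have henergyA : ∫⁻ p in (A ×ˢ A) ∩ {p : E × E | edist p.1 p.2 < ENNReal.ofReal r},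
      (edist p.1 p.2) ^ (-D) ∂(μ.prod μ) ≠ ∞ :=
    ((lintegral_mono_set hsub).trans_lt (hω n)).ne
  exact frostman_aux μ hD' hr hAmeas hAB hk hAfin henergyA
end
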